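/- arXiv:2102.06379 — 2 statements merged into one kernel-verified Lean document; each statement's English description precedes it below -/
import Mathlib

section
/- Let g be a c-concave function for the cost c(x,y) = h(x-y) with h convex and differentiable. Then for every (a,b), (x,y) ∈ ∂^c g with g(a), g(x) finite, |g(x) - g(a)| ≤ |x - a| · ( |∇h(x-y)| + |∇h(a-y)| + |∇h(x-b)| + |∇h(a-b)| ). -/
/-!
Testing `(a, b) ∈ ∂^c g` at `z = x` gives `g x - g a ≤ h (x - b) - h (a - b)`, and the gradient
inequality for the convex `h` at `x - b` bounds the right side by `‖∇h (x - b)‖ ‖x - a‖`.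
Symmetrically, `(x, y) ∈ ∂^c g` tested at `z = a` bounds `g a - g x` by `‖∇h (a - y)‖ ‖x - a‖`.
-/

theorem ConvexOn.le_sub_of_hasFDerivAt {E : Type*} [NormedAddCommGroup E] [NormedSpace ℝ E]
    {s : Set E} {f : E → ℝ} {f' : E →L[ℝ] ℝ} {u v : E} (hf : ConvexOn ℝ s f) (hu : u ∈ s)
    (hv : v ∈ s) (hfd : HasFDerivAt f f' u) : f' (v - u) ≤ f v - f u := by
  set L : ℝ →ᵃ[ℝ] E := AffineMap.lineMap u v
  have hL : HasDerivAt (f ∘ L) (f' (v - u)) 0 :=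
    (by simpa [L] using hfd : HasFDerivAt f f' (L 0)).comp_hasDerivAt 0
      AffineMap.hasDerivAt_lineMap
  have hslope := (hf.comp_affineMap L).le_slope_of_hasDerivAt (x := 0) (y := 1)
    (by simpa [L] using hu) (by simpa [L] using hv) zero_lt_one hL
  simpa [slope, L] using hslope

section CSuperdifferential

variable {F : Type*} [NormedAddCommGroup F] [InnerProductSpace ℝ F] [CompleteSpace F]

theorem ConvexOn.sub_le_norm_gradient_mul_norm_sub {s : Set F} {f : F → ℝ} {u v : F}
    (hf : ConvexOn ℝ s f) (hu : u ∈ s) (hv : v ∈ s) (hfd : DifferentiableAt ℝ f u) :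
    f u - f v ≤ ‖gradient f u‖ * ‖u - v‖ :=
  calc f u - f v ≤ -fderiv ℝ f u (v - u) := by
        linarith [hf.le_sub_of_hasFDerivAt hu hv hfd.hasFDerivAt]
    _ = inner ℝ (gradient f u) (u - v) := by
        rw [inner_gradient_left, ← map_neg, neg_sub]
    _ ≤ ‖gradient f u‖ * ‖u - v‖ := real_inner_le_norm _ _

/-- `(a, b) ∈ ∂^c g` for the cost `c(x, y) = h (x - y)`. -/
def MemCSuperdiff (h : F → ℝ) (g : F → EReal) (a b : F) : Prop :=
  ∀ z, g z ≤ g a + ((h (z - b) : EReal) - (h (a - b) : EReal))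

theorem MemCSuperdiff.sub_le_norm_sub_mul_norm_gradient {h : F → ℝ} {g : F → EReal}
    {a b x : F} {ga gx : ℝ} (hab : MemCSuperdiff h g a b) (hconv : ConvexOn ℝ Set.univ h)
    (hdiff : DifferentiableAt ℝ h (x - b)) (hga : g a = ga) (hgx : g x = gx) :
    gx - ga ≤ ‖x - a‖ * ‖gradient h (x - b)‖ := by
  have hle : gx ≤ ga + (h (x - b) - h (a - b)) := by
    have := hab x
    rw [hgx, hga] at this
    exact_mod_cast this
  have hgrad := hconv.sub_le_norm_gradient_mul_norm_sub trivial trivial hdiff (v := a - b)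
  rw [sub_sub_sub_cancel_right] at hgrad
  linarith

end CSuperdifferential

theorem c_concave_local_lipschitz_bound_general {d : ℕ}
    (h : EuclideanSpace ℝ (Fin d) → ℝ)
    (hconv : ConvexOn ℝ Set.univ h) (hdiff : Differentiable ℝ h)
    (g : EuclideanSpace ℝ (Fin d) → EReal)
    (a b x y : EuclideanSpace ℝ (Fin d)) (ga gx : ℝ)
    (hga : g a = (ga : EReal)) (hgx : g x = (gx : EReal))
    (hab : ∀ z, g z ≤ g a + ((h (z - b) : EReal) - (h (a - b) : EReal)))
    (hxy : ∀ z, g z ≤ g x + ((h (z - y) : EReal) - (h (x - y) : EReal))) :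
    |gx - ga| ≤ ‖x - a‖ *
      (‖gradient h (x - y)‖ + ‖gradient h (a - y)‖ +
        ‖gradient h (x - b)‖ + ‖gradient h (a - b)‖) := by
  have hx_sub_a : gx - ga ≤ ‖x - a‖ * ‖gradient h (x - b)‖ :=
    MemCSuperdiff.sub_le_norm_sub_mul_norm_gradient hab hconv (hdiff _) hga hgx
  have ha_sub_x : ga - gx ≤ ‖x - a‖ * ‖gradient h (a - y)‖ := by
    rw [norm_sub_rev]
    exact MemCSuperdiff.sub_le_norm_sub_mul_norm_gradient hxy hconv (hdiff _) hgx hga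
  rw [abs_sub_le_iff]
  constructor <;>
    nlinarith [norm_nonneg (x - a), norm_nonneg (gradient h (x - y)),
      norm_nonneg (gradient h (a - y)), norm_nonneg (gradient h (x - b)),
      norm_nonneg (gradient h (a - b))]

/-- For `c(x,y) = h(x-y)` with `h` convex differentiable, a `c`-concave `g` and
`(a,b), (x,y) ∈ ∂^c g` with finite values, the local Lipschitz bound
`|g(x) - g(a)| ≤ |x-a| (|∇h(x-y)| + |∇h(a-y)| + |∇h(x-b)| + |∇h(a-b)|)` holds. -/
theorem c_concave_local_lipschitz_bound {d : ℕ}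
    (h : EuclideanSpace ℝ (Fin d) → ℝ)
    (hconv : ConvexOn ℝ Set.univ h) (hdiff : Differentiable ℝ h)
    (g : EuclideanSpace ℝ (Fin d) → EReal)
    (T : Set (EuclideanSpace ℝ (Fin d) × ℝ))
    (hconc : ∀ x, g x = ⨅ p ∈ T, ((h (x - p.1) : EReal) - (p.2 : EReal)))
    (a b x y : EuclideanSpace ℝ (Fin d)) (ga gx : ℝ)
    (hga : g a = (ga : EReal)) (hgx : g x = (gx : EReal))
    (hab : ∀ z, g z ≤ g a + ((h (z - b) : EReal) - (h (a - b) : EReal)))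
    (hxy : ∀ z, g z ≤ g x + ((h (z - y) : EReal) - (h (x - y) : EReal))) :
    |gx - ga| ≤ ‖x - a‖ *
      (‖gradient h (x - y)‖ + ‖gradient h (a - y)‖ +
        ‖gradient h (x - b)‖ + ‖gradient h (a - b)‖) :=
  c_concave_local_lipschitz_bound_general h hconv hdiff g a b x y ga gx hga hgx hab hxy
end

section
/- (Efron–Stein inequality) Let X₁,…,X_n be independent random variables, X'₁,…,X'_n an independent copy, f a measurable function with f(X₁,…,X_n) square integrable, Z = f(X₁,…,X_n), and Z'_i = f(X₁,…,X_{i-1}, X'_i, X_{i+1},…,X_n). Then Var(Z) ≤ (1/2) Σ_{i=1}^n E[(Z - Z'_i)²] = Σ_{i=1}^n E[(Z - Z'_i)₊²]. -/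
/-!
Write `W S` for `f` evaluated at `X` with the coordinates in `S` taken from `X'`, so `Z = W ∅`,
`Z'_i = W {i}`, and `W univ = f(X')` is an independent copy of `Z`; hence
`Var Z = E[Z (W ∅ - W univ)]`, which telescopes into the terms `E[Z (W S - W (S ∆ {i}))]`.
Exchanging `X i` with `X' i` preserves the joint law, sends `Z` to `Z'_i` and swaps `W S` with
`W (S ∆ {i})`, so such a term equals `½ E[(Z - Z'_i)(W S - W (S ∆ {i}))]`. By `2ab ≤ a² + b²`
it is at most `¼ (E(Z - Z'_i)² + E(W S - W (S ∆ {i}))²)`, and exchanging the coordinates in `S`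
shows that the two expectations agree. The same exchange of `X i` and `X' i` gives
`E(Z - Z'_i)₊² = E(Z'_i - Z)₊²`, whence the identity, as `(a - b)² = (a - b)₊² + (b - a)₊²`.
-/

open MeasureTheory ProbabilityTheory Finset
open scoped symmDiff

@[simp]
lemma Finset.empty_symmDiff {α : Type*} [DecidableEq α] (s : Finset α) : ∅ ∆ s = s :=
  bot_symmDiff s

lemma Finset.symmDiff_singleton_of_notMem {α : Type*} [DecidableEq α] {s : Finset α} {a : α}
    (h : a ∉ s) : s ∆ {a} = insert a s := by
  ext b
  by_cases hb : b = a
  · subst hb; simp [mem_symmDiff, h]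
  · simp [mem_symmDiff, hb]

lemma MeasureTheory.MeasurePreserving.integral_comp_of_aestronglyMeasurable {α β : Type*}
    [MeasurableSpace α] [MeasurableSpace β] {μ : Measure α} {ν : Measure β} {T : α → β}
    (hT : MeasurePreserving T μ ν) {g : β → ℝ} (hg : AEStronglyMeasurable g ν) :
    ∫ x, g (T x) ∂μ = ∫ y, g y ∂ν := by
  rw [← hT.map_eq] at hg ⊢
  exact (integral_map hT.aemeasurable hg).symm

lemma MeasureTheory.integral_mul_le_half_add_sq {α : Type*} [MeasurableSpace α] {μ : Measure α}
    {u v : α → ℝ} (hu : MemLp u 2 μ) (hv : MemLp v 2 μ) :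
    ∫ x, u x * v x ∂μ ≤ (∫ x, u x ^ 2 ∂μ + ∫ x, v x ^ 2 ∂μ) / 2 := by
  rw [← integral_add hu.integrable_sq hv.integrable_sq, ← integral_div]
  exact integral_mono (hu.integrable_mul hv) ((hu.integrable_sq.add hv.integrable_sq).div_const 2)
    fun x => by nlinarith [sq_nonneg (u x - v x)]

lemma sq_sub_eq_max_sq_add_max_sq (a b : ℝ) :
    (a - b) ^ 2 = max (a - b) 0 ^ 2 + max (b - a) 0 ^ 2 := by
  rcases le_total a b with h | h
  · rw [max_eq_right (by linarith), max_eq_left (by linarith)]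
    ring
  · rw [max_eq_left (by linarith), max_eq_right (by linarith)]
    ring

namespace EfronStein

variable {ι β : Type*}

section Exchange

variable [DecidableEq ι]

def exchange (S : Finset ι) (x : ι → β × β) : ι → β × β :=
  fun i => if i ∈ S then (x i).swap else x i

@[simp]
lemma exchange_empty (x : ι → β × β) : exchange ∅ x = x :=
  funext fun i => if_neg (notMem_empty i)

lemma exchange_exchange (S T : Finset ι) (x : ι → β × β) :
    exchange S (exchange T x) = exchange (S ∆ T) x := by
  funext i
  by_cases hS : i ∈ S <;> by_cases hT : i ∈ T <;> simp [exchange, mem_symmDiff, hS, hT]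

lemma exchange_involutive (S : Finset ι) : Function.Involutive (exchange (β := β) S) := fun x => by
  rw [exchange_exchange, symmDiff_self, bot_eq_empty, exchange_empty]

/-- A point `x` encodes the pairs `(X i, X' i)`: `resample f S x` is `f` evaluated at `X` with the
coordinates in `S` taken from the copy `X'`. -/
def resample (f : (ι → β) → ℝ) (S : Finset ι) (x : ι → β × β) : ℝ :=
  f fun i => (exchange S x i).1

lemma resample_exchange (f : (ι → β) → ℝ) (S T : Finset ι) (x : ι → β × β) :
    resample f S (exchange T x) = resample f (S ∆ T) x := by
  rw [resample, resample, exchange_exchange]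

@[simp]
lemma resample_empty (f : (ι → β) → ℝ) (x : ι → β × β) :
    resample f ∅ x = f fun i => (x i).1 := by
  simp [resample]

@[simp]
lemma resample_singleton (f : (ι → β) → ℝ) (i : ι) (x : ι → β × β) :
    resample f {i} x = f (Function.update (fun j => (x j).1) i (x i).2) := by
  rw [resample]
  congr 1 with j
  by_cases hj : j = i
  · subst hj; simp [exchange]
  · simp [exchange, hj]

@[simp]
lemma resample_univ [Fintype ι] (f : (ι → β) → ℝ) (x : ι → β × β) :
    resample f univ x = f fun i => (x i).2 := by
  simp [resample, exchange]

variable [MeasurableSpace β]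

lemma measurable_exchange (S : Finset ι) : Measurable (exchange (β := β) S) :=
  measurable_pi_lambda _ fun i => by
    by_cases hi : i ∈ S
    · simp only [exchange, hi, if_true]
      exact measurable_swap.comp (measurable_pi_apply i)
    · simpa only [exchange, hi, if_false] using measurable_pi_apply i

lemma measurable_resample {f : (ι → β) → ℝ} (hf : Measurable f) (S : Finset ι) :
    Measurable (resample f S) :=
  hf.comp <| measurable_pi_lambda _ fun i =>
    measurable_fst.comp ((measurable_pi_apply i).comp (measurable_exchange S))

end Exchange

variable [Fintype ι] [MeasurableSpace β]

noncomputable abbrev pairLaw (μ : ι → Measure β) : Measure (ι → β × β) :=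
  .pi fun i => (μ i).prod (μ i)

lemma measurePreserving_pairs {Ω : Type*} [MeasurableSpace Ω] {P : Measure Ω}
    [IsProbabilityMeasure P] {X X' : ι → Ω → β} (hX : ∀ i, Measurable (X i))
    (hX' : ∀ i, Measurable (X' i)) (hindep : iIndepFun (Sum.elim X X') P)
    (hid : ∀ i, P.map (X' i) = P.map (X i)) :
    MeasurePreserving (fun ω i => (X i ω, X' i ω)) P (pairLaw fun i => P.map (X i)) := by
  have hY : ∀ j, Measurable (Sum.elim X X' j) := fun j => j.rec hX hX'
  have h_joint : MeasurePreserving (fun ω j => Sum.elim X X' j ω) P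
      (Measure.pi fun j => P.map (Sum.elim X X' j)) :=
    ⟨measurable_pi_lambda _ hY, hindep.map_fun_eq_pi_map fun j => (hY j).aemeasurable⟩
  have h_split := (measurePreserving_sumPiEquivProdPi _).comp h_joint
  simp only [Sum.elim_inl, Sum.elim_inr, hid] at h_split
  exact (measurePreserving_arrowProdEquivProdArrow β β ι _ _).symm.comp h_split

variable [DecidableEq ι]

section SigmaFinite

variable (μ : ι → Measure β) [∀ i, SigmaFinite (μ i)]

lemma measurePreserving_exchange (S : Finset ι) :
    MeasurePreserving (exchange S) (pairLaw μ) (pairLaw μ) := by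
  have h := measurePreserving_pi (fun i => (μ i).prod (μ i)) (fun i => (μ i).prod (μ i))
    (f := fun i => if i ∈ S then Prod.swap else id) fun i => by
      split_ifs
      · exact Measure.measurePreserving_swap
      · exact .id _
  convert h using 2 with x
  funext i
  split_ifs <;> simp [exchange, *]

lemma integral_comp_exchange (S : Finset ι) (φ : (ι → β × β) → ℝ) :
    ∫ x, φ (exchange S x) ∂pairLaw μ = ∫ x, φ x ∂pairLaw μ :=
  (measurePreserving_exchange μ S).integral_comp (MeasurableEquiv.ofInvolutive _
    (exchange_involutive S) (measurable_exchange S)).measurableEmbedding φ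

variable {μ} {f : (ι → β) → ℝ}

lemma memLp_resample (hf : MemLp (resample f ∅) 2 (pairLaw μ)) (S : Finset ι) :
    MemLp (resample f S) 2 (pairLaw μ) := by
  simpa [Function.comp_def, resample_exchange] using
    hf.comp_measurePreserving (measurePreserving_exchange μ S)

lemma integral_mul_sub_resample_symmDiff_le (hf : MemLp (resample f ∅) 2 (pairLaw μ))
    (S : Finset ι) (i : ι) :
    ∫ x, resample f ∅ x * (resample f S x - resample f (S ∆ {i}) x) ∂pairLaw μ
      ≤ (1 / 2) * ∫ x, (resample f ∅ x - resample f {i} x) ^ 2 ∂pairLaw μ := by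
  have h_swap_i := integral_comp_exchange μ {i}
    fun x => resample f {i} x * (resample f (S ∆ {i}) x - resample f S x)
  have h_swap_S := integral_comp_exchange μ S
    fun x => (resample f ∅ x - resample f {i} x) ^ 2
  simp only [resample_exchange, empty_symmDiff, symmDiff_self, bot_eq_empty,
    symmDiff_symmDiff_cancel_right, symmDiff_comm {i} S] at h_swap_i h_swap_S
  have hZi := memLp_resample hf {i}
  have hA := memLp_resample hf S
  have hB := memLp_resample hf (S ∆ {i})
  set Z := resample f ∅
  set Zi := resample f {i}
  set A := resample f S
  set B := resample f (S ∆ {i})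
  have h_sum : ∫ x, Z x * (A x - B x) ∂pairLaw μ + ∫ x, Zi x * (B x - A x) ∂pairLaw μ
      = ∫ x, (Z x - Zi x) * (A x - B x) ∂pairLaw μ := by
    rw [← integral_add]
    · congr 1 with x
      ring
    · exact hf.integrable_mul (hA.sub hB)
    · exact hZi.integrable_mul (hB.sub hA)
  have := integral_mul_le_half_add_sq (u := fun x => Z x - Zi x) (v := fun x => A x - B x)
    (hf.sub hZi) (hA.sub hB)
  linarith

lemma integral_mul_sub_resample_le_sum (hf : MemLp (resample f ∅) 2 (pairLaw μ)) (S : Finset ι) :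
    ∫ x, resample f ∅ x * (resample f ∅ x - resample f S x) ∂pairLaw μ
      ≤ (1 / 2) * ∑ i ∈ S, ∫ x, (resample f ∅ x - resample f {i} x) ^ 2 ∂pairLaw μ := by
  induction S using Finset.induction_on with
  | empty => simp
  | insert i S hi ih =>
    have h_step := integral_mul_sub_resample_symmDiff_le hf S i
    rw [sum_insert hi, ← symmDiff_singleton_of_notMem hi]
    have h_split : ∫ x, resample f ∅ x * (resample f ∅ x - resample f (S ∆ {i}) x) ∂pairLaw μ
        = ∫ x, resample f ∅ x * (resample f ∅ x - resample f S x) ∂pairLaw μ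
          + ∫ x, resample f ∅ x * (resample f S x - resample f (S ∆ {i}) x) ∂pairLaw μ := by
      rw [← integral_add]
      · congr 1 with x
        ring
      · exact hf.integrable_mul (hf.sub (memLp_resample hf S))
      · exact hf.integrable_mul ((memLp_resample hf S).sub (memLp_resample hf _))
    linarith

lemma integral_sq_sub_resample_eq (hf : MemLp (resample f ∅) 2 (pairLaw μ)) (i : ι) :
    ∫ x, (resample f ∅ x - resample f {i} x) ^ 2 ∂pairLaw μ
      = 2 * ∫ x, max (resample f ∅ x - resample f {i} x) 0 ^ 2 ∂pairLaw μ := by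
  have h_swap := integral_comp_exchange μ {i}
    fun x => max (resample f ∅ x - resample f {i} x) 0 ^ 2
  simp only [resample_exchange, empty_symmDiff, symmDiff_self, bot_eq_empty] at h_swap
  simp_rw [sq_sub_eq_max_sq_add_max_sq (resample f ∅ _)]
  rw [integral_add, h_swap, two_mul]
  · exact (hf.sub (memLp_resample hf {i})).pos_part.integrable_sq
  · exact ((memLp_resample hf {i}).sub hf).pos_part.integrable_sq

end SigmaFinite

section Probability

variable {μ : ι → Measure β} [∀ i, IsProbabilityMeasure (μ i)] {f : (ι → β) → ℝ}

lemma variance_eq_integral_mul_sub_resample_univ (hf : MemLp (resample f ∅) 2 (pairLaw μ)) :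
    variance (resample f ∅) (pairLaw μ)
      = ∫ x, resample f ∅ x * (resample f ∅ x - resample f univ x) ∂pairLaw μ := by
  have hmp := measurePreserving_arrowProdEquivProdArrow β β ι μ μ
  have h_mean : ∫ x, resample f ∅ x ∂pairLaw μ = ∫ y, f y ∂Measure.pi μ := by
    have h_fst := integral_fun_fst (μ := Measure.pi μ) (ν := Measure.pi μ) f
    simp only [probReal_univ, one_smul] at h_fst
    rw [← h_fst, ← hmp.integral_comp']
    simp only [resample_empty]
    rfl
  have h_indep : ∫ x, resample f ∅ x * resample f univ x ∂pairLaw μ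
      = (∫ y, f y ∂Measure.pi μ) ^ 2 := by
    rw [sq, ← integral_prod_mul (μ := Measure.pi μ), ← hmp.integral_comp']
    simp only [resample_empty, resample_univ]
    rfl
  rw [variance_eq_sub hf, h_mean, ← h_indep, ← integral_sub]
  · congr 1 with x
    rw [Pi.pow_apply]
    ring
  · exact hf.integrable_sq
  · exact hf.integrable_mul (memLp_resample hf univ)

theorem variance_resample_le (hf : MemLp (resample f ∅) 2 (pairLaw μ)) :
    variance (resample f ∅) (pairLaw μ)
      ≤ (1 / 2) * ∑ i, ∫ x, (resample f ∅ x - resample f {i} x) ^ 2 ∂pairLaw μ := by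
  rw [variance_eq_integral_mul_sub_resample_univ hf]
  exact integral_mul_sub_resample_le_sum hf univ

end Probability

end EfronStein

open EfronStein

theorem efron_stein_general {n : ℕ} {β : Type*} [MeasurableSpace β]
    {Ω : Type*} [MeasureSpace Ω] [IsProbabilityMeasure (ℙ : Measure Ω)]
    (X X' : Fin n → Ω → β)
    (hmX : ∀ i, Measurable (X i)) (hmX' : ∀ i, Measurable (X' i))
    (hindep : iIndepFun (m := fun _ => ‹MeasurableSpace β›) (Sum.elim X X') ℙ)
    (hid : ∀ i, Measure.map (X' i) ℙ = Measure.map (X i) ℙ)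
    (f : (Fin n → β) → ℝ) (hf : Measurable f)
    (Z : Ω → ℝ) (hZ : Z = fun ω => f (fun i => X i ω))
    (Z' : Fin n → Ω → ℝ)
    (hZ' : ∀ i, Z' i = fun ω => f (Function.update (fun j => X j ω) i (X' i ω)))
    (hZL2 : MemLp Z 2 ℙ) :
    variance Z ℙ ≤ (1 / 2) * ∑ i, ∫ ω, (Z ω - Z' i ω) ^ 2 ∂ℙ ∧
    (1 / 2) * ∑ i, ∫ ω, (Z ω - Z' i ω) ^ 2 ∂ℙ =
      ∑ i, ∫ ω, (max (Z ω - Z' i ω) 0) ^ 2 ∂ℙ := by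
  set μ : Fin n → Measure β := fun i => (ℙ : Measure Ω).map (X i)
  have : ∀ i, IsProbabilityMeasure (μ i) := fun i =>
    Measure.isProbabilityMeasure_map (hmX i).aemeasurable
  set T : Ω → Fin n → β × β := fun ω i => (X i ω, X' i ω)
  have hT : MeasurePreserving T ℙ (pairLaw μ) := measurePreserving_pairs hmX hmX' hindep hid
  have hZ_T : Z = fun ω => resample f ∅ (T ω) := by simp [hZ, T]
  have hZ'_T : Z' = fun i ω => resample f {i} (T ω) := by
    funext i; simp [hZ', T]
  subst hZ_T hZ'_T
  have hmeas := measurable_resample hf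
  have hL2 : MemLp (resample f ∅) 2 (pairLaw μ) := by
    rw [← hT.map_eq]
    exact (memLp_map_measure_iff (hmeas ∅).aestronglyMeasurable hT.aemeasurable).2 hZL2
  have h_sq (i : Fin n) := hT.integral_comp_of_aestronglyMeasurable
    (g := fun x => (resample f ∅ x - resample f {i} x) ^ 2)
    (((hmeas ∅).sub (hmeas {i})).pow_const 2).aestronglyMeasurable
  have h_pos (i : Fin n) := hT.integral_comp_of_aestronglyMeasurable
    (g := fun x => max (resample f ∅ x - resample f {i} x) 0 ^ 2)
    ((((hmeas ∅).sub (hmeas {i})).max measurable_const).pow_const 2).aestronglyMeasurable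
  simp only [hT.variance_fun_comp (hmeas ∅).aemeasurable, h_sq, h_pos]
  refine ⟨variance_resample_le hL2, ?_⟩
  rw [mul_sum]
  exact sum_congr rfl fun i _ => by rw [integral_sq_sub_resample_eq hL2 i]; ring

/-- Efron–Stein inequality: For independent `X₁,…,X_n` with independent copy
`X'₁,…,X'_n`, `Z = f(X₁,…,X_n)` and `Z'_i` obtained by replacing the `i`-th coordinate,
`Var(Z) ≤ (1/2) Σᵢ E[(Z - Z'_i)²] = Σᵢ E[(Z - Z'_i)₊²]`. -/
theorem efron_stein {n : ℕ} {β : Type*} [MeasurableSpace β]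
    {Ω : Type*} [MeasureSpace Ω] [IsProbabilityMeasure (ℙ : Measure Ω)]
    (X X' : Fin n → Ω → β)
    (hmX : ∀ i, Measurable (X i)) (hmX' : ∀ i, Measurable (X' i))
    (hindep : iIndepFun (m := fun _ => ‹MeasurableSpace β›) (Sum.elim X X') ℙ)
    (hid : ∀ i, Measure.map (X' i) ℙ = Measure.map (X i) ℙ)
    (f : (Fin n → β) → ℝ) (hf : Measurable f)
    (Z : Ω → ℝ) (hZ : Z = fun ω => f (fun i => X i ω))
    (Z' : Fin n → Ω → ℝ)
    (hZ' : ∀ i, Z' i = fun ω => f (Function.update (fun j => X j ω) i (X' i ω)))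
    (hZL2 : MemLp Z 2 ℙ) (hZ'L2 : ∀ i, MemLp (Z' i) 2 ℙ) :
    variance Z ℙ ≤ (1 / 2) * ∑ i, ∫ ω, (Z ω - Z' i ω) ^ 2 ∂ℙ ∧
    (1 / 2) * ∑ i, ∫ ω, (Z ω - Z' i ω) ^ 2 ∂ℙ =
      ∑ i, ∫ ω, (max (Z ω - Z' i ω) 0) ^ 2 ∂ℙ :=
  efron_stein_general X X' hmX hmX' hindep hid f hf Z hZ Z' hZ' hZL2
end
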